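/- arXiv:math/0405109 — 5 statements merged into one kernel-verified Lean document; each statement's English description precedes it below -/
import Mathlib

section
/- The discrete Heisenberg group ℋ is isomorphic to the group presented by ⟨x, y : [x,[x,y]] = 1, [y,[x,y]] = 1⟩, via the map sending x to (0,1,0) and y to (0,0,1). -/
def H : Type := ℤ × ℤ × ℤ

namespace H

def mk (a b c : ℤ) : H := (a, b, c)

@[simp] lemma fst_mk (a b c : ℤ) : (mk a b c).1 = a := rfl
@[simp] lemma snd_fst_mk (a b c : ℤ) : (mk a b c).2.1 = b := rfl
@[simp] lemma snd_snd_mk (a b c : ℤ) : (mk a b c).2.2 = c := rfl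

lemma mk_inj {a b c x y z : ℤ} : mk a b c = mk x y z ↔ a = x ∧ b = y ∧ c = z :=
  ⟨fun h => ⟨congrArg (fun p : H => p.1) h, congrArg (fun p : H => p.2.1) h,
      congrArg (fun p : H => p.2.2) h⟩,
   fun h => by rw [h.1, h.2.1, h.2.2]⟩

lemma eta (p : H) : p = mk p.1 p.2.1 p.2.2 := rfl

instance : One H := ⟨mk 0 0 0⟩
instance : Mul H := ⟨fun p q => mk (p.1 + q.1 + p.2.1 * q.2.2) (p.2.1 + q.2.1) (p.2.2 + q.2.2)⟩
instance : Inv H := ⟨fun p => mk (-p.1 + p.2.1 * p.2.2) (-p.2.1) (-p.2.2)⟩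

lemma mul_def (p q : H) :
    p * q = mk (p.1 + q.1 + p.2.1 * q.2.2) (p.2.1 + q.2.1) (p.2.2 + q.2.2) := rfl
lemma one_def : (1 : H) = mk 0 0 0 := rfl
lemma inv_def (p : H) : p⁻¹ = mk (-p.1 + p.2.1 * p.2.2) (-p.2.1) (-p.2.2) := rfl

instance instGroup : Group H := Group.ofLeftAxioms
  (by intro p q r
      simp only [mul_def, fst_mk, snd_fst_mk, snd_snd_mk, mk_inj]
      refine ⟨by ring, by ring, by ring⟩)
  (by intro p
      rw [eta p]
      simp only [mul_def, one_def, fst_mk, snd_fst_mk, snd_snd_mk, mk_inj]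
      refine ⟨by ring, by ring, by ring⟩)
  (by intro p
      simp only [mul_def, one_def, inv_def, fst_mk, snd_fst_mk, snd_snd_mk, mk_inj]
      refine ⟨by ring, by ring, by ring⟩)

lemma mk_mul (a b c x y z : ℤ) :
    mk a b c * mk x y z = mk (a + x + b * z) (b + y) (c + z) := by
  simp [mul_def]

lemma mk_inv (a b c : ℤ) : (mk a b c)⁻¹ = mk (-a + b * c) (-b) (-c) := by
  simp [inv_def]

end H

open scoped commutatorElement

/-- The relators of the presentation ⟨x, y : [x,[x,y]], [y,[x,y]]⟩. -/
def heisenbergRels : Set (FreeGroup Bool) :=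
  { ⁅FreeGroup.of true, ⁅FreeGroup.of true, FreeGroup.of false⁆⁆,
    ⁅FreeGroup.of false, ⁅FreeGroup.of true, FreeGroup.of false⁆⁆ }

/-! If `z = ⁅x, y⁆` commutes with `x` and `y`, then
`x ^ b * y ^ c = z ^ (b * c) * y ^ c * x ^ b`. This identity makes
`(a, b, c) ↦ z ^ a * y ^ c * x ^ b` a homomorphism from `H` to any group containing such `x, y`;
applied to the generators of the presented group it inverts the map to `H`, since both
composites fix the generators. -/

section CommutatorCentral

variable {G : Type*} [Group G] {a b c : G}

theorem mul_eq_inv_mul_mul_of_mul_eq (h : a * b = c * b * a) : b * a = c⁻¹ * a * b := by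
  rw [mul_assoc, h]; group

theorem mul_zpow_eq_of_mul_eq (h : a * b = c * b * a) (hcb : Commute c b) (n : ℤ) :
    a * b ^ n = c ^ n * b ^ n * a := by
  have hconj : SemiconjBy a (b ^ n) ((c * b) ^ n) := SemiconjBy.zpow_right h n
  rwa [hcb.mul_zpow] at hconj

theorem zpow_mul_zpow_eq_of_mul_eq (h : a * b = c * b * a) (hca : Commute c a)
    (hcb : Commute c b) (m n : ℤ) : a ^ m * b ^ n = c ^ (m * n) * b ^ n * a ^ m := by
  have hb : b ^ n * a = (c ^ n)⁻¹ * a * b ^ n :=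
    mul_eq_inv_mul_mul_of_mul_eq (mul_zpow_eq_of_mul_eq h hcb n)
  have hab := mul_eq_inv_mul_mul_of_mul_eq (mul_zpow_eq_of_mul_eq hb (hca.zpow_left n).inv_left m)
  rwa [inv_zpow, inv_inv, ← zpow_mul, mul_comm n] at hab

theorem mul_eq_commutatorElement_mul_mul (a b : G) : a * b = ⁅a, b⁆ * b * a := by
  rw [commutatorElement_def]; group

end CommutatorCentral

namespace H

theorem commute_mk_zero_zero (a : ℤ) (p : H) : Commute (mk a 0 0) p := by
  rw [eta p, Commute, SemiconjBy, mk_mul, mk_mul, mk_inj]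
  exact ⟨by ring, by ring, by ring⟩

theorem commutatorElement_mk_zero_one_zero_mk_zero_zero_one :
    ⁅mk 0 1 0, mk 0 0 1⁆ = mk 1 0 0 := by
  simp [commutatorElement_def, mk_mul, mk_inv]

theorem mk_zero_zpow (a c n : ℤ) : mk a 0 c ^ n = mk (n * a) 0 (n * c) := by
  induction n using Int.induction_on with
  | zero => simp [one_def]
  | succ k ih => rw [zpow_add_one, ih, mk_mul, mk_inj]; exact ⟨by ring, by ring, by ring⟩
  | pred k ih =>
    rw [zpow_sub_one, ih, mk_inv, mk_mul, mk_inj]; exact ⟨by ring, by ring, by ring⟩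

theorem mk_zpow_zero (a b n : ℤ) : mk a b 0 ^ n = mk (n * a) (n * b) 0 := by
  induction n using Int.induction_on with
  | zero => simp [one_def]
  | succ k ih => rw [zpow_add_one, ih, mk_mul, mk_inj]; exact ⟨by ring, by ring, by ring⟩
  | pred k ih =>
    rw [zpow_sub_one, ih, mk_inv, mk_mul, mk_inj]; exact ⟨by ring, by ring, by ring⟩

variable {G : Type*} [Group G]

def lift (x y : G) (hx : Commute x ⁅x, y⁆) (hy : Commute y ⁅x, y⁆) : H →* G where
  toFun p := ⁅x, y⁆ ^ p.1 * y ^ p.2.2 * x ^ p.2.1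
  map_one' := by simp [one_def]
  map_mul' := by
    rintro ⟨a, b, c⟩ ⟨a', b', c'⟩
    change _ = ⁅x, y⁆ ^ a * y ^ c * x ^ b * (⁅x, y⁆ ^ a' * y ^ c' * x ^ b')
    set z := ⁅x, y⁆
    have hzx (k m : ℤ) : Commute (z ^ k) (x ^ m) := (hx.zpow_zpow m k).symm
    have hzy (k m : ℤ) : Commute (z ^ k) (y ^ m) := (hy.zpow_zpow m k).symm
    have hxy : x ^ b * y ^ c' = z ^ (b * c') * y ^ c' * x ^ b :=
      zpow_mul_zpow_eq_of_mul_eq (mul_eq_commutatorElement_mul_mul x y) hx.symm hy.symm b c'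
    calc z ^ (a + a' + b * c') * y ^ (c + c') * x ^ (b + b')
        = z ^ a * (z ^ a' * (y ^ c * (z ^ (b * c') * (y ^ c' * (x ^ b * x ^ b'))))) := by
          simp only [zpow_add, mul_assoc, (hzy (b * c') c).left_comm]
      _ = z ^ a * (y ^ c * (z ^ a' * (x ^ b * y ^ c' * x ^ b'))) := by
          simp only [hxy, mul_assoc, (hzy a' c).left_comm]
      _ = z ^ a * y ^ c * x ^ b * (z ^ a' * y ^ c' * x ^ b') := by
          simp only [mul_assoc, (hzx a' b).left_comm]

@[simp] theorem lift_mk (x y : G) (hx : Commute x ⁅x, y⁆) (hy : Commute y ⁅x, y⁆)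
    (a b c : ℤ) :
    lift x y hx hy (mk a b c) = ⁅x, y⁆ ^ a * y ^ c * x ^ b := rfl

end H

namespace HeisenbergPresentation

open PresentedGroup

def generatorImage : Bool → H := fun i => if i then H.mk 0 1 0 else H.mk 0 0 1

theorem lift_generatorImage_eq_one :
    ∀ r ∈ heisenbergRels, FreeGroup.lift generatorImage r = 1 := by
  have hcentral (p : H) : ⁅p, H.mk 1 0 0⁆ = 1 :=
    commutatorElement_eq_one_iff_commute.mpr (H.commute_mk_zero_zero 1 p).symm
  rintro r (rfl | rfl) <;>
    simp [generatorImage, H.commutatorElement_mk_zero_one_zero_mk_zero_zero_one, hcentral]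

def toH : PresentedGroup heisenbergRels →* H := toGroup lift_generatorImage_eq_one

theorem toH_of (i : Bool) : toH (of i) = generatorImage i := toGroup.of _

theorem commute_of_commutatorElement (i : Bool) :
    Commute (of i : PresentedGroup heisenbergRels)
      ⁅(of true : PresentedGroup heisenbergRels), of false⁆ := by
  rw [← commutatorElement_eq_one_iff_commute]
  cases i
  · exact one_of_mem (Set.mem_insert_of_mem _ rfl)
  · exact one_of_mem (Set.mem_insert _ _)

def ofH : H →* PresentedGroup heisenbergRels :=
  H.lift (of true) (of false) (commute_of_commutatorElement true)
    (commute_of_commutatorElement false)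

theorem ofH_comp_toH : ofH.comp toH = MonoidHom.id _ := by
  ext i
  cases i <;> simp [toH_of, generatorImage, ofH]

theorem toH_comp_ofH : toH.comp ofH = MonoidHom.id H := by
  refine MonoidHom.ext fun p => ?_
  rw [H.eta p]
  simp [ofH, toH_of, generatorImage, H.commutatorElement_mk_zero_one_zero_mk_zero_zero_one,
    H.mk_zero_zpow, H.mk_zpow_zero, H.mk_mul]

def mulEquivH : PresentedGroup heisenbergRels ≃* H :=
  toH.toMulEquiv ofH ofH_comp_toH toH_comp_ofH

end HeisenbergPresentation

/-- The discrete Heisenberg group is isomorphic to ⟨x, y : [x,[x,y]], [y,[x,y]]⟩ via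
x ↦ (0,1,0), y ↦ (0,0,1). -/
theorem heisenberg_presentation :
    ∃ e : PresentedGroup heisenbergRels ≃* H,
      e (PresentedGroup.of true) = H.mk 0 1 0 ∧
      e (PresentedGroup.of false) = H.mk 0 0 1 :=
  ⟨HeisenbergPresentation.mulEquivH, HeisenbergPresentation.toH_of true,
    HeisenbergPresentation.toH_of false⟩
end

section
/- Every group endomorphism h of ℋ_{f0} maps the center ℚ × 0 × 0 into itself. -/
/-!
The center `ℚ × 0 × 0` is divisible: `(q, 0, 0) = (q / n, 0, 0) ^ n`. Hence `h (q, 0, 0)` has an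
`n`-th root for every `n ≥ 1`, so its image under the projection `Hf →* ℤ × ℤ`, whose kernel is the
center, is divisible by every `n`; the only such element of `ℤ × ℤ` is `0`.
-/

/-- The fibrewise rationalization of the discrete Heisenberg group: ℚ × ℤ × ℤ. -/
def Hf : Type := ℚ × ℤ × ℤ

namespace Hf

def mk (a : ℚ) (b c : ℤ) : Hf := (a, b, c)

@[simp] lemma fst_mk (a : ℚ) (b c : ℤ) : (mk a b c).1 = a := rfl
@[simp] lemma snd_fst_mk (a : ℚ) (b c : ℤ) : (mk a b c).2.1 = b := rfl
@[simp] lemma snd_snd_mk (a : ℚ) (b c : ℤ) : (mk a b c).2.2 = c := rfl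

lemma mk_inj {a x : ℚ} {b c y z : ℤ} : mk a b c = mk x y z ↔ a = x ∧ b = y ∧ c = z :=
  ⟨fun h => ⟨congrArg (fun p : Hf => p.1) h, congrArg (fun p : Hf => p.2.1) h,
      congrArg (fun p : Hf => p.2.2) h⟩,
   fun h => by rw [h.1, h.2.1, h.2.2]⟩

lemma eta (p : Hf) : p = mk p.1 p.2.1 p.2.2 := rfl

instance : One Hf := ⟨mk 0 0 0⟩
instance : Mul Hf :=
  ⟨fun p q => mk (p.1 + q.1 + (p.2.1 : ℚ) * (q.2.2 : ℚ)) (p.2.1 + q.2.1) (p.2.2 + q.2.2)⟩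
instance : Inv Hf :=
  ⟨fun p => mk (-p.1 + (p.2.1 : ℚ) * (p.2.2 : ℚ)) (-p.2.1) (-p.2.2)⟩

lemma mul_def (p q : Hf) :
    p * q = mk (p.1 + q.1 + (p.2.1 : ℚ) * (q.2.2 : ℚ)) (p.2.1 + q.2.1) (p.2.2 + q.2.2) := rfl
lemma one_def : (1 : Hf) = mk 0 0 0 := rfl
lemma inv_def (p : Hf) :
    p⁻¹ = mk (-p.1 + (p.2.1 : ℚ) * (p.2.2 : ℚ)) (-p.2.1) (-p.2.2) := rfl

instance instGroup : Group Hf := Group.ofLeftAxioms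
  (by intro p q r
      simp only [mul_def, fst_mk, snd_fst_mk, snd_snd_mk, mk_inj]
      refine ⟨by push_cast; ring, by ring, by ring⟩)
  (by intro p
      rw [eta p]
      simp only [mul_def, one_def, fst_mk, snd_fst_mk, snd_snd_mk, mk_inj]
      refine ⟨by push_cast; ring, by ring, by ring⟩)
  (by intro p
      simp only [mul_def, one_def, inv_def, fst_mk, snd_fst_mk, snd_snd_mk, mk_inj]
      refine ⟨by push_cast; ring, by ring, by ring⟩)

lemma mk_mul (a x : ℚ) (b c y z : ℤ) :
    mk a b c * mk x y z = mk (a + x + (b : ℚ) * (z : ℚ)) (b + y) (c + z) := by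
  simp [mul_def]

end Hf

lemma Int.eq_zero_of_forall_nat_dvd {m : ℤ} (h : ∀ n : ℕ, n ≠ 0 → (n : ℤ) ∣ m) : m = 0 :=
  Int.eq_zero_of_dvd_of_natAbs_lt_natAbs (h (m.natAbs + 1) m.natAbs.succ_ne_zero)
    (by rw [Int.natAbs_natCast]; exact Nat.lt_succ_self _)

lemma Prod.int_eq_zero_of_forall_exists_nsmul {v : ℤ × ℤ} (h : ∀ n : ℕ, n ≠ 0 → ∃ w, n • w = v) :
    v = 0 := by
  have hdvd : ∀ n : ℕ, n ≠ 0 → (n : ℤ) ∣ v.1 ∧ (n : ℤ) ∣ v.2 := fun n hn => by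
    obtain ⟨w, rfl⟩ := h n hn
    exact ⟨⟨w.1, by simp⟩, ⟨w.2, by simp⟩⟩
  exact Prod.ext (Int.eq_zero_of_forall_nat_dvd fun n hn => (hdvd n hn).1)
    (Int.eq_zero_of_forall_nat_dvd fun n hn => (hdvd n hn).2)

namespace Hf

def sndHom : Hf →* Multiplicative (ℤ × ℤ) where
  toFun p := Multiplicative.ofAdd (p.2.1, p.2.2)
  map_one' := rfl
  map_mul' _ _ := rfl

lemma mk_pow (a : ℚ) (n : ℕ) : mk a 0 0 ^ n = mk (n * a) 0 0 := by
  induction n with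
  | zero => simp [one_def]
  | succ n ih =>
    rw [pow_succ, ih, mk_mul, mk_inj]
    exact ⟨by push_cast; ring, rfl, rfl⟩

lemma exists_pow_eq_mk (q : ℚ) {n : ℕ} (hn : n ≠ 0) : ∃ x : Hf, x ^ n = mk q 0 0 :=
  ⟨mk (q / n) 0 0, by rw [mk_pow, mul_div_cancel₀ _ (Nat.cast_ne_zero.mpr hn)]⟩

lemma eq_mk_of_forall_exists_pow {p : Hf} (h : ∀ n : ℕ, n ≠ 0 → ∃ x : Hf, x ^ n = p) :
    p = mk p.1 0 0 := by
  have hsnd : Multiplicative.toAdd (sndHom p) = 0 :=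
    Prod.int_eq_zero_of_forall_exists_nsmul fun n hn => by
      obtain ⟨x, rfl⟩ := h n hn
      exact ⟨Multiplicative.toAdd (sndHom x), by rw [map_pow, toAdd_pow]⟩
  obtain ⟨hb, hc⟩ := Prod.mk_eq_zero.mp hsnd
  rw [eta p, mk_inj]
  exact ⟨rfl, hb, hc⟩

end Hf

/-- Every endomorphism of ℋ_{f0} maps the center ℚ × 0 × 0 into itself. -/
theorem hf_endo_preserves_center (h : Hf →* Hf) (q : ℚ) :
    ∃ r : ℚ, h (Hf.mk q 0 0) = Hf.mk r 0 0 :=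
  ⟨_, Hf.eq_mk_of_forall_exists_pow fun n hn => by
    obtain ⟨x, hx⟩ := Hf.exists_pow_eq_mk q hn
    exact ⟨h x, by rw [← map_pow, hx]⟩⟩
end

section
/- For any triples (a,b,c), (d,e,f) in ℋ_{f0}, there exists a group endomorphism h of ℋ_{f0} with h(0,1,0) = (a,b,c) and h(0,0,1) = (d,e,f). -/
/-!
An endomorphism is determined by the images `x`, `y` of `X = (0,1,0)` and `Y = (0,0,1)`, and any
choice extends. Every element factors as `(p, m, n) = (p - m n, 0, 0) • X ^ m • Y ^ n`, where
`(1, 0, 0)` is the commutator of `X` and `Y`; so it must go to the commutator of `x` and `y`, the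
central element `(x₂ y₃ - x₃ y₂, 0, 0)`. Since the centre is `ℚ` rather than `ℤ`, the resulting
formula, built from `x ^ m = (m x₁ + x₂ x₃ m (m - 1) / 2, m x₂, m x₃)`, is defined on all of
`ℚ × ℤ × ℤ`, and multiplicativity is a polynomial identity.
-/

namespace Hf

def lift (x y : Hf) : Hf →* Hf where
  toFun p := mk
    (((x.2.1 : ℚ) * y.2.2 - x.2.2 * y.2.1) * p.1 + x.1 * p.2.1 + y.1 * p.2.2
      + (x.2.1 : ℚ) * x.2.2 * ((p.2.1 : ℚ) * (p.2.1 - 1)) / 2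
      + (y.2.1 : ℚ) * y.2.2 * ((p.2.2 : ℚ) * (p.2.2 - 1)) / 2
      + (x.2.2 : ℚ) * y.2.1 * p.2.1 * p.2.2)
    (x.2.1 * p.2.1 + y.2.1 * p.2.2) (x.2.2 * p.2.1 + y.2.2 * p.2.2)
  map_one' := by
    simp only [one_def, fst_mk, snd_fst_mk, snd_snd_mk, mk_inj]
    refine ⟨by push_cast; ring, by ring, by ring⟩
  map_mul' p q := by
    simp only [mul_def, fst_mk, snd_fst_mk, snd_snd_mk, mk_inj]
    refine ⟨by push_cast; ring, by ring, by ring⟩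

lemma lift_apply_mk_zero_one_zero (x y : Hf) : lift x y (mk 0 1 0) = x := by
  rw [eta x]
  simp only [lift, MonoidHom.coe_mk, OneHom.coe_mk, fst_mk, snd_fst_mk, snd_snd_mk, mk_inj]
  refine ⟨by push_cast; ring, by ring, by ring⟩

lemma lift_apply_mk_zero_zero_one (x y : Hf) : lift x y (mk 0 0 1) = y := by
  rw [eta y]
  simp only [lift, MonoidHom.coe_mk, OneHom.coe_mk, fst_mk, snd_fst_mk, snd_snd_mk, mk_inj]
  refine ⟨by push_cast; ring, by ring, by ring⟩

end Hf

/-- For any two target elements there is an endomorphism of ℋ_{f0} sending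
(0,1,0) and (0,0,1) to them. -/
theorem hf_endo_exists (a d : ℚ) (b c e f : ℤ) :
    ∃ h : Hf →* Hf, h (Hf.mk 0 1 0) = Hf.mk a b c ∧ h (Hf.mk 0 0 1) = Hf.mk d e f :=
  ⟨Hf.lift _ _, Hf.lift_apply_mk_zero_one_zero _ _, Hf.lift_apply_mk_zero_zero_one _ _⟩
end

section
/- Let h be the endomorphism of ℋ_{f0} with h(0,1,0) = (a,b,c) and h(0,0,1) = (d,e,f). Then h is an automorphism if and only if b·f - c·e = ±1. -/
namespace Hf

lemma zpow_mk (m : ℤ) (a : ℚ) (b c : ℤ) :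
    (Hf.mk a b c) ^ m =
      Hf.mk ((m : ℚ) * a + (m : ℚ) * ((m : ℚ) - 1) / 2 * ((b : ℚ) * c)) (m * b) (m * c) := by
  induction m using Int.induction_on with
  | zero => simp [one_def, mk_inj]
  | succ i ih =>
      rw [zpow_add_one, ih, mk_mul, mk_inj]
      refine ⟨by push_cast; ring, by ring, by ring⟩
  | pred i ih =>
      rw [show (-(i:ℤ) - 1) = (-(i:ℤ)) - 1 from rfl, zpow_sub_one, ih, mul_def]
      simp only [fst_mk, snd_fst_mk, snd_snd_mk, inv_def, mk_inj]
      refine ⟨by push_cast; ring, by ring, by ring⟩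



lemma comm_eq : Hf.mk 1 0 0 = Hf.mk 0 1 0 * Hf.mk 0 0 1 * (Hf.mk 0 1 0)⁻¹ * (Hf.mk 0 0 1)⁻¹ := by
  simp only [mul_def, inv_def, fst_mk, snd_fst_mk, snd_snd_mk, mk_inj]
  norm_num

lemma h_one_zero_zero (a d : ℚ) (b c e f : ℤ) (h : Hf →* Hf)
    (h1 : h (Hf.mk 0 1 0) = Hf.mk a b c) (h2 : h (Hf.mk 0 0 1) = Hf.mk d e f) :
    h (Hf.mk 1 0 0) = Hf.mk (((b : ℚ) * f - (c : ℚ) * e)) 0 0 := by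
  rw [comm_eq, map_mul, map_mul, map_mul, map_inv, map_inv, h1, h2]
  simp only [mul_def, inv_def, fst_mk, snd_fst_mk, snd_snd_mk, mk_inj]
  refine ⟨by push_cast; ring, by ring, by ring⟩

lemma h_center (a d : ℚ) (b c e f : ℤ) (h : Hf →* Hf)
    (h1 : h (Hf.mk 0 1 0) = Hf.mk a b c) (h2 : h (Hf.mk 0 0 1) = Hf.mk d e f) (q : ℚ) :
    h (Hf.mk q 0 0) = Hf.mk (q * ((b : ℚ) * f - (c : ℚ) * e)) 0 0 := by
  have hden : ((q.den : ℚ)) ≠ 0 := by exact_mod_cast (Rat.den_ne_zero q)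
  have hnum : ((q.den : ℚ)) * q = (q.num : ℚ) := by
    rw [mul_comm]; exact Rat.mul_den_eq_num q
  have hq : (Hf.mk q 0 0) ^ (q.den : ℤ) = (Hf.mk 1 0 0) ^ q.num := by
    rw [zpow_mk, zpow_mk, mk_inj]
    refine ⟨?_, by ring, by ring⟩
    push_cast
    rw [hnum]; ring
  have key : (h (Hf.mk q 0 0)) ^ (q.den : ℤ) =
      Hf.mk ((q.num : ℚ) * ((b : ℚ) * f - (c : ℚ) * e)) 0 0 := by
    rw [← map_zpow, hq, map_zpow, h_one_zero_zero a d b c e f h h1 h2, zpow_mk, mk_inj]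
    exact ⟨by push_cast; ring, by ring, by ring⟩
  rw [eta (h (Hf.mk q 0 0)), zpow_mk, mk_inj] at key
  obtain ⟨k1, k2, k3⟩ := key
  have hd0 : (q.den : ℤ) ≠ 0 := by exact_mod_cast Rat.den_ne_zero q
  have hb0 : (h (Hf.mk q 0 0)).2.1 = 0 := by
    rcases mul_eq_zero.mp k2 with h' | h' <;> [exact absurd h' hd0; exact h']
  have hc0 : (h (Hf.mk q 0 0)).2.2 = 0 := by
    rcases mul_eq_zero.mp k3 with h' | h' <;> [exact absurd h' hd0; exact h']
  rw [eta (h (Hf.mk q 0 0)), hb0, hc0, mk_inj]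
  refine ⟨?_, rfl, rfl⟩
  rw [hb0, hc0] at k1
  push_cast at k1
  rw [← hnum] at k1
  exact mul_left_cancel₀ hden (by linear_combination k1)


lemma decomp (q : ℚ) (m n : ℤ) :
    Hf.mk q m n = Hf.mk (q - (m : ℚ) * n) 0 0 * (Hf.mk 0 1 0) ^ m * (Hf.mk 0 0 1) ^ n := by
  rw [zpow_mk, zpow_mk]
  simp only [mul_def, fst_mk, snd_fst_mk, snd_snd_mk, mk_inj]
  refine ⟨by push_cast; ring, by ring, by ring⟩

lemma h_formula (a d : ℚ) (b c e f : ℤ) (h : Hf →* Hf)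
    (h1 : h (Hf.mk 0 1 0) = Hf.mk a b c) (h2 : h (Hf.mk 0 0 1) = Hf.mk d e f)
    (q : ℚ) (m n : ℤ) :
    h (Hf.mk q m n) = Hf.mk
      (((b : ℚ) * f - (c : ℚ) * e) * (q - (m : ℚ) * n)
        + ((m : ℚ) * a + (m : ℚ) * ((m : ℚ) - 1) / 2 * ((b : ℚ) * c))
        + ((n : ℚ) * d + (n : ℚ) * ((n : ℚ) - 1) / 2 * ((e : ℚ) * f))
        + (m : ℚ) * b * ((n : ℚ) * f))
      (m * b + n * e) (m * c + n * f) := by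
  rw [decomp, map_mul, map_mul, map_zpow, map_zpow, h1, h2,
    h_center a d b c e f h h1 h2, zpow_mk, zpow_mk]
  simp only [mul_def, fst_mk, snd_fst_mk, snd_snd_mk, mk_inj]
  refine ⟨by push_cast; ring, by ring, by ring⟩
end Hf

/-- The endomorphism of ℋ_{f0} with h(0,1,0) = (a,b,c), h(0,0,1) = (d,e,f) is an
automorphism iff bf - ce = ±1. -/
theorem hf_endo_bijective_iff (a d : ℚ) (b c e f : ℤ) (h : Hf →* Hf)
    (h1 : h (Hf.mk 0 1 0) = Hf.mk a b c) (h2 : h (Hf.mk 0 0 1) = Hf.mk d e f) :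
    Function.Bijective h ↔ (b * f - c * e = 1 ∨ b * f - c * e = -1) := by
  constructor
  · intro hb
    obtain ⟨p1, hp1⟩ := hb.2 (Hf.mk 0 1 0)
    obtain ⟨p2, hp2⟩ := hb.2 (Hf.mk 0 0 1)
    rw [Hf.eta p1, Hf.h_formula a d b c e f h h1 h2, Hf.mk_inj] at hp1
    rw [Hf.eta p2, Hf.h_formula a d b c e f h h1 h2, Hf.mk_inj] at hp2
    obtain ⟨-, e1, e2⟩ := hp1
    obtain ⟨-, e3, e4⟩ := hp2
    have key : (b * f - c * e) * (p1.2.1 * p2.2.2 - p2.2.1 * p1.2.2) = 1 := by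
      linear_combination (p2.2.1 * c + p2.2.2 * f) * e1 + e4 - (p1.2.1 * c + p1.2.2 * f) * e3
    exact Int.isUnit_iff.mp (IsUnit.of_mul_eq_one _ key)
  · intro hD
    have hD2 : (b * f - c * e) * (b * f - c * e) = 1 := by
      rcases hD with h' | h' <;> rw [h'] <;> norm_num
    have hDz : b * f - c * e ≠ 0 := by rcases hD with h' | h' <;> omega
    have hDQ : ((b : ℚ) * f - (c : ℚ) * e) ≠ 0 := by
      intro h0
      have : ((b * f - c * e : ℤ) : ℚ) = 0 := by push_cast; linarith
      exact hDz (by exact_mod_cast this)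
    constructor
    · intro p q' hpq
      rw [Hf.eta p, Hf.eta q', Hf.h_formula a d b c e f h h1 h2,
        Hf.h_formula a d b c e f h h1 h2, Hf.mk_inj] at hpq
      obtain ⟨E1, E2, E3⟩ := hpq
      have hu : (p.2.1 - q'.2.1) * (b * f - c * e) = 0 := by
        linear_combination f * E2 - e * E3
      have hv : (p.2.2 - q'.2.2) * (b * f - c * e) = 0 := by
        linear_combination (-c) * E2 + b * E3
      have hu0 : p.2.1 = q'.2.1 := by
        rcases mul_eq_zero.mp hu with h' | h'
        · omega
        · exact absurd h' hDz
      have hv0 : p.2.2 = q'.2.2 := by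
        rcases mul_eq_zero.mp hv with h' | h'
        · omega
        · exact absurd h' hDz
      have hu' : (p.2.1 : ℚ) = (q'.2.1 : ℚ) := by exact_mod_cast hu0
      have hv' : (p.2.2 : ℚ) = (q'.2.2 : ℚ) := by exact_mod_cast hv0
      rw [Hf.eta p, Hf.eta q', Hf.mk_inj]
      refine ⟨?_, hu0, hv0⟩
      rw [hu', hv'] at E1
      have := mul_left_cancel₀ hDQ
        (show ((b : ℚ) * f - (c : ℚ) * e) * (p.1 - (q'.2.1 : ℚ) * (q'.2.2 : ℚ))
            = ((b : ℚ) * f - (c : ℚ) * e) * (q'.1 - (q'.2.1 : ℚ) * (q'.2.2 : ℚ)) from by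
          linear_combination E1)
      linarith
    · intro p
      refine ⟨Hf.mk
          ((p.1
            - ((((b * f - c * e) * (f * p.2.1 - e * p.2.2) : ℤ) : ℚ) * a
              + (((b * f - c * e) * (f * p.2.1 - e * p.2.2) : ℤ) : ℚ)
                * ((((b * f - c * e) * (f * p.2.1 - e * p.2.2) : ℤ) : ℚ) - 1) / 2 * ((b : ℚ) * c)
              + ((((b * f - c * e) * (b * p.2.2 - c * p.2.1) : ℤ) : ℚ) * d
                + (((b * f - c * e) * (b * p.2.2 - c * p.2.1) : ℤ) : ℚ)
                  * ((((b * f - c * e) * (b * p.2.2 - c * p.2.1) : ℤ) : ℚ) - 1) / 2 * ((e : ℚ) * f))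
              + (((b * f - c * e) * (f * p.2.1 - e * p.2.2) : ℤ) : ℚ) * b
                * ((((b * f - c * e) * (b * p.2.2 - c * p.2.1) : ℤ) : ℚ) * f)))
            / ((b : ℚ) * f - (c : ℚ) * e)
            + (((b * f - c * e) * (f * p.2.1 - e * p.2.2) : ℤ) : ℚ)
              * (((b * f - c * e) * (b * p.2.2 - c * p.2.1) : ℤ) : ℚ))
          ((b * f - c * e) * (f * p.2.1 - e * p.2.2))
          ((b * f - c * e) * (b * p.2.2 - c * p.2.1)), ?_⟩
      rw [Hf.h_formula a d b c e f h h1 h2]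
      conv_rhs => rw [Hf.eta p]
      rw [Hf.mk_inj]
      refine ⟨?_, ?_, ?_⟩
      · push_cast
        field_simp
        ring
      · linear_combination p.2.1 * hD2
      · linear_combination p.2.2 * hD2
end

section
/- The homomorphism ρ₁ : Aut(ℋ_{f0}) → GL(2,ℤ) induced by the action of automorphisms on the abelianization ℋ_{f0}/Z(ℋ_{f0}) ≅ ℤ² is surjective. -/
/-- The projection of ℋ_{f0} onto ℋ_{f0}/Z(ℋ_{f0}) = ℤ², written as a vector. -/
def hfPr (g : Hf) : Fin 2 → ℤ := ![g.2.1, g.2.2]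

/-!
Write `M = [[A, B], [C, E]]`. The candidate automorphism is
`(a, b, c) ↦ (det M · a + Q(b, c), Ab + Bc, Cb + Ec)` with `Q` quadratic, chosen so that the map
respects the cocycle `bz` in the multiplication. It is bijective by a five-lemma argument on the
central extension `ℚ → Hf → ℤ²`: it induces `M` on the quotient and multiplication by the unit
`det M` on the centre.
-/

namespace Hf

open Matrix

lemma eq_mul_central_of_hfPr_eq {p q : Hf} (h : hfPr p = hfPr q) :
    p = q * mk (p.1 - q.1) 0 0 := by
  have hb : p.2.1 = q.2.1 := congrFun h 0
  have hc : p.2.2 = q.2.2 := congrFun h 1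
  conv_lhs => rw [eta p]
  rw [eta q, mk_mul, mk_inj]
  exact ⟨by simp, by simp [hb], by simp [hc]⟩

theorem bijective_of_hfPr_of_central {φ : Hf →* Hf} (M : GL (Fin 2) ℤ) (r : ℚ) (hr : r ≠ 0)
    (hpr : ∀ g, hfPr (φ g) = (M : Matrix (Fin 2) (Fin 2) ℤ) *ᵥ hfPr g)
    (hcentral : ∀ a, φ (mk a 0 0) = mk (r * a) 0 0) :
    Function.Bijective φ := by
  have hM : IsUnit (M : Matrix (Fin 2) (Fin 2) ℤ) := M.isUnit
  constructor
  · refine (injective_iff_map_eq_one φ).2 fun g hg => ?_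
    have hg₀ : hfPr g = hfPr 1 := mulVec_injective_of_isUnit hM <| by
      rw [← hpr, ← hpr, hg, map_one]
    have hg_central : g = mk g.1 0 0 := by
      refine (eq_mul_central_of_hfPr_eq hg₀).trans ?_
      rw [one_mul, one_def, fst_mk, sub_zero]
    rw [hg_central, hcentral, one_def, mk_inj] at hg
    rw [hg_central, one_def, mk_inj]
    exact ⟨(mul_eq_zero.1 hg.1).resolve_left hr, rfl, rfl⟩
  · intro p
    obtain ⟨v, hv⟩ := mulVec_surjective_iff_isUnit.2 hM (hfPr p)
    set g := mk 0 (v 0) (v 1)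
    have hgv : hfPr g = v := by
      ext i
      fin_cases i <;> rfl
    have hpg : hfPr (φ g) = hfPr p := by rw [hpr, hgv, hv]
    refine ⟨g * mk (r⁻¹ * (p.1 - (φ g).1)) 0 0, ?_⟩
    rw [map_mul, hcentral, mul_inv_cancel_left₀ hr]
    exact (eq_mul_central_of_hfPr_eq hpg.symm).symm

/-- With `M = [[A, B], [C, E]]`, the correction `Q` satisfies
`Q(b + y, c + z) - Q(b, c) - Q(y, z) = (Ab + Bc)(Cy + Ez) - det M · bz`. -/
def ofMatrix (M : Matrix (Fin 2) (Fin 2) ℤ) : Hf →* Hf where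
  toFun p :=
    let Q : ℚ := M 0 0 * M 1 0 * p.2.1 * (p.2.1 - 1) / 2 + M 0 1 * M 1 1 * p.2.2 * (p.2.2 - 1) / 2
      + M 0 1 * M 1 0 * p.2.1 * p.2.2
    mk (M.det * p.1 + Q) (M 0 0 * p.2.1 + M 0 1 * p.2.2) (M 1 0 * p.2.1 + M 1 1 * p.2.2)
  map_one' := by
    simp only [one_def, fst_mk, snd_fst_mk, snd_snd_mk, mk_inj]
    norm_num
  map_mul' p q := by
    simp only [mul_def, fst_mk, snd_fst_mk, snd_snd_mk, mk_inj, det_fin_two]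
    refine ⟨by push_cast; ring, by ring, by ring⟩

lemma hfPr_ofMatrix (M : Matrix (Fin 2) (Fin 2) ℤ) (g : Hf) :
    hfPr (ofMatrix M g) = M *ᵥ hfPr g := by
  ext i
  fin_cases i <;> simp [ofMatrix, hfPr, mulVec, dotProduct]

lemma ofMatrix_central (M : Matrix (Fin 2) (Fin 2) ℤ) (a : ℚ) :
    ofMatrix M (mk a 0 0) = mk (M.det * a) 0 0 := by
  simp [ofMatrix]

end Hf

/-- ρ₁ : Aut(ℋ_{f0}) → GL(2,ℤ) is surjective: every integral matrix of determinant ±1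
is induced on ℤ² = ℋ_{f0}/Z(ℋ_{f0}) by some automorphism of ℋ_{f0}. -/
theorem hf_rho1_surjective (M : GL (Fin 2) ℤ) :
    ∃ h : Hf ≃* Hf, ∀ g : Hf,
      hfPr (h g) = Matrix.mulVec (M : Matrix (Fin 2) (Fin 2) ℤ) (hfPr g) := by
  have hdet : ((M : Matrix (Fin 2) (Fin 2) ℤ).det : ℚ) ≠ 0 := by
    exact_mod_cast (M.isUnit.map Matrix.detMonoidHom).ne_zero
  refine ⟨MulEquiv.ofBijective (Hf.ofMatrix M) ?_, Hf.hfPr_ofMatrix M⟩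
  exact Hf.bijective_of_hfPr_of_central M _ hdet (Hf.hfPr_ofMatrix M) (Hf.ofMatrix_central M)
end
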